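/- arXiv:1112.3602 — 3 statements merged into one kernel-verified Lean document; each statement's English description precedes it below -/
import Mathlib

section
/- Let T ⊆ ℝ^n be a closed set, let I ⊆ ℤ_+^n be a finite set with 0 ∈ I such that max_{i∈I} |i| = 2k for some k ∈ ℕ and 2k·e_ι ∈ I for every 1 ≤ ι ≤ n, let g = (g_i)_{i∈I} be real numbers with g_0 = 1, and fix ρ ∈ L^1(T, dt) with ρ > 0 a.e. on T. If there exists f ∈ L^1(T, dt) with f ≥ 0 a.e., ∫_T |t^i| f(t) dt < ∞ and ∫_T t^i f(t) dt = g_i for all i ∈ I, then the functional L(λ) = Σ_{i∈I} g_i λ_i − ∫_T e^{Σ_{i∈I} λ_i t^i} ρ(t) dt on ℝ^N (N = card I) is bounded from above and attains its supremum at some point λ* ∈ ℝ^N. (No regularity assumption on T is needed for this implication.) -/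
open MeasureTheory Real ENNReal

/-- The monomial `t ^ i = t₁^{i₁} ⋯ tₙ^{iₙ}`. -/
noncomputable def monom {n : ℕ} (i : Fin n → ℕ) (t : Fin n → ℝ) : ℝ := ∏ j, t j ^ i j

/-- The concave Lagrangian functional
`L(λ) = ∑_{i∈I} g_i λ_i − ∫_T e^{∑_{i∈I} λ_i t^i} ρ(t) dt`, with values in `ℝ ∪ {−∞}`. -/
noncomputable def Lag {n : ℕ} (T : Set (Fin n → ℝ)) (I : Finset (Fin n → ℕ))
    (g : (Fin n → ℕ) → ℝ) (ρ : (Fin n → ℝ) → ℝ) (lam : {i // i ∈ I} → ℝ) : EReal :=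
  ((∑ i ∈ I.attach, g i.1 * lam i : ℝ) : EReal)
    - ((∫⁻ t in T, ENNReal.ofReal (Real.exp (∑ i ∈ I.attach, lam i * monom i.1 t) * ρ t)) : EReal)

open Filter Topology

/-!
The Lagrangian `L(λ) = ⟨g, λ⟩ - ∫_T e^{λ(t)} ρ(t) dt`, where `λ(t) = ∑ λ_i t^i`, is upper
semicontinuous by Fatou's lemma, so it attains its maximum once it tends to `-∞` at infinity.
Write `λ = Rθ` with `‖θ‖ = 1`. As `e^x ≥ x²/2`, the integral is at least `R²/2 ∫_T (θ(t)⁺)² ρ`.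
If `∫_T (θ(t)⁺)² ρ = 0`, then `θ(t) ≤ 0` on `T` because `ρ > 0`, so `⟨g, θ⟩ = ∫_T θ(t) f(t) ≤ 0`,
with equality only if `f = 0` a.e. (the zero set of the nonzero polynomial `θ(t)` is null),
which contradicts `∫_T f = g₀ = 1`. Compactness of the unit sphere then yields `c > 0` such that
for every `θ` either `∫_T (θ(t)⁺)² ρ ≥ c` or `⟨g, θ⟩ ≤ -c`; in both cases `L(Rθ) ≤ -cR` for
large `R`.
-/

theorem UpperSemicontinuous.exists_forall_ge' {α β : Type*} [TopologicalSpace α] [LinearOrder β]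
    {f : α → β} (hf : UpperSemicontinuous f) (x₀ : α)
    (h : ∀ᶠ x in cocompact α, f x ≤ f x₀) : ∃ x, ∀ y, f y ≤ f x := by
  obtain ⟨K, hK, hKf⟩ := hasBasis_cocompact.eventually_iff.1 h
  obtain ⟨x, -, hx⟩ := (hf.upperSemicontinuousOn _).exists_isMaxOn (Set.insert_nonempty x₀ K)
    (hK.insert x₀)
  refine ⟨x, fun y => ?_⟩
  by_cases hyK : y ∈ K
  · exact hx (Set.mem_insert_of_mem _ hyK)
  · exact (hKf hyK).trans (hx (Set.mem_insert _ _))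

theorem lowerSemicontinuous_lintegral {α X : Type*} [MeasurableSpace α] {μ : Measure α}
    [TopologicalSpace X] [FirstCountableTopology X] {F : X → α → ℝ≥0∞}
    (hF_meas : ∀ x, AEMeasurable (F x) μ) (hF : ∀ a, LowerSemicontinuous fun x => F x a) :
    LowerSemicontinuous fun x => ∫⁻ a, F x a ∂μ := by
  refine lowerSemicontinuous_iff_le_liminf.2 fun x => ?_
  calc ∫⁻ a, F x a ∂μ ≤ ∫⁻ a, liminf (fun y => F y a) (𝓝 x) ∂μ :=
        lintegral_mono fun a => lowerSemicontinuous_iff_le_liminf.1 (hF a) x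
    _ ≤ liminf (fun y => ∫⁻ a, F y a ∂μ) (𝓝 x) := lintegral_liminf_le' hF_meas

theorem EReal.upperSemicontinuous_coe_sub_coe_ennreal {X : Type*} [TopologicalSpace X]
    {a : X → ℝ} {b : X → ℝ≥0∞} (ha : Continuous a) (hb : LowerSemicontinuous b) :
    UpperSemicontinuous fun x => (a x : EReal) - b x := by
  have hneg : UpperSemicontinuous fun x => -(b x : EReal) :=
    (continuous_neg.comp continuous_coe_ennreal_ereal).comp_lowerSemicontinuous_antitone hb
      fun _ _ h => EReal.neg_le_neg_iff.2 (EReal.coe_ennreal_le_coe_ennreal_iff.2 h)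
  exact (continuous_coe_real_ereal.comp ha).upperSemicontinuous.add' hneg
    fun x => EReal.continuousAt_add (Or.inl (EReal.coe_ne_top _)) (Or.inl (EReal.coe_ne_bot _))

theorem EReal.coe_sub_coe_ennreal_le {a x : ℝ} {c : ℝ≥0∞} (hx : 0 ≤ x)
    (h : ENNReal.ofReal x ≤ c) : (a : EReal) - c ≤ ((a - x : ℝ) : EReal) := by
  rw [EReal.coe_sub]
  refine EReal.sub_le_sub le_rfl ?_
  have : ((ENNReal.ofReal x : ℝ≥0∞) : EReal) = x := by
    rw [EReal.coe_ennreal_ofReal, max_eq_left hx]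
  rw [← this]
  exact EReal.coe_ennreal_le_coe_ennreal_iff.2 h

theorem MvPolynomial.volume_setOf_eval_eq_zero {n : ℕ} {p : MvPolynomial (Fin n) ℝ}
    (hp : p ≠ 0) : volume {x : Fin n → ℝ | eval x p = 0} = 0 := by
  induction n with
  | zero =>
    have : {x : Fin 0 → ℝ | eval x p = 0} = ∅ := by
      ext x
      rw [p.eq_C_of_isEmpty] at hp ⊢
      simpa using fun h => hp (by rw [h, map_zero])
    rw [this, measure_empty]
  | succ m ih =>
    set S := {x : Fin (m + 1) → ℝ | eval x p = 0}
    have hS : MeasurableSet S := (isClosed_eq (continuous_eval p) continuous_const).measurableSet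
    set e := MeasurableEquiv.piFinSuccAbove (fun _ : Fin (m + 1) => ℝ) 0
    have he : MeasurePreserving e.symm (volume.prod volume) volume :=
      (measurePreserving_piFinSuccAbove (fun _ : Fin (m + 1) => (volume : Measure ℝ)) 0).symm
    -- Fubini, writing `p` as a polynomial in `x₀` over the other variables: the slice through
    -- `x` is finite as soon as the leading coefficient does not vanish at `x`.
    set q := finSuccEquiv ℝ m p
    have hd : q.leadingCoeff ≠ 0 := by simpa [q] using hp
    have hslice : ∀ x : Fin m → ℝ, eval x q.leadingCoeff ≠ 0 →
        volume ((fun y => (y, x)) ⁻¹' (e.symm ⁻¹' S)) = 0 := by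
      intro x hx
      have hne : Polynomial.map (eval x) q ≠ 0 := fun h => hx (by
        simpa using congrArg (Polynomial.coeff · q.natDegree) h)
      refine measure_mono_null (fun y hy => ?_)
        ((Polynomial.finite_setOfPred_isRoot hne).measure_zero _)
      simp only [Set.mem_preimage, S, Set.mem_ofPred_eq, e,
        MeasurableEquiv.piFinSuccAbove_symm_apply] at hy
      rwa [show Fin.insertNthEquiv (fun _ => ℝ) 0 (y, x) = Fin.cons y x by
        simp [Fin.insertNthEquiv], eval_eq_eval_mv_eval'] at hy
    have hgood : ∀ᵐ x : Fin m → ℝ, eval x q.leadingCoeff ≠ 0 := by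
      simpa [ae_iff] using ih hd
    rw [← he.measure_preimage hS.nullMeasurableSet, Measure.prod_apply_symm (e.symm.measurable hS)]
    refine (lintegral_congr_ae ?_).trans lintegral_zero
    filter_upwards [hgood] with x hx using hslice x hx

theorem IsCompact.exists_pos_ofReal_le_or_le_neg {X : Type*} [TopologicalSpace X] {K : Set X}
    (hK : IsCompact K) {q : X → ℝ≥0∞} (hq : LowerSemicontinuous q) {a : X → ℝ}
    (ha : Continuous a) (h : ∀ x ∈ K, q x = 0 → a x < 0) :
    ∃ c > 0, ∀ x ∈ K, ENNReal.ofReal c ≤ q x ∨ a x ≤ -c := by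
  rcases K.eq_empty_or_nonempty with rfl | hKne
  · exact ⟨1, one_pos, by simp⟩
  -- minimise `q + (-a)⁺`, which is positive on `K`
  have hΦ : LowerSemicontinuous fun x => q x + ENNReal.ofReal (-a x) :=
    hq.add (ENNReal.continuous_ofReal.comp ha.neg).lowerSemicontinuous
  obtain ⟨x₀, hx₀, hmin⟩ := (hΦ.lowerSemicontinuousOn K).exists_isMinOn hKne hK
  have hpos : 0 < q x₀ + ENNReal.ofReal (-a x₀) := by
    rcases eq_or_ne (q x₀) 0 with h0 | h0
    · simpa [h0] using h x₀ hx₀ h0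
    · exact add_pos_of_pos_of_nonneg (pos_iff_ne_zero.2 h0) zero_le
  obtain ⟨r, -, hr0, hr⟩ := ENNReal.lt_iff_exists_real_btwn.1 hpos
  have hr0 : 0 < r := ENNReal.ofReal_pos.1 hr0
  refine ⟨r / 2, half_pos hr0, fun x hx => or_iff_not_imp_right.2 fun hax => ?_⟩
  have hle : ENNReal.ofReal (r / 2) + ENNReal.ofReal (r / 2) ≤ q x + ENNReal.ofReal (r / 2) :=
    calc ENNReal.ofReal (r / 2) + ENNReal.ofReal (r / 2) = ENNReal.ofReal r := by
          rw [← ENNReal.ofReal_add (half_pos hr0).le (half_pos hr0).le, add_halves]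
      _ ≤ q x + ENNReal.ofReal (-a x) := hr.le.trans (hmin hx)
      _ ≤ q x + ENNReal.ofReal (r / 2) := by gcongr; linarith
  exact (ENNReal.add_le_add_iff_right ENNReal.ofReal_ne_top).1 hle

section Lagrangian

variable {n : ℕ} {T : Set (Fin n → ℝ)} {I : Finset (Fin n → ℕ)} {g : (Fin n → ℕ) → ℝ}
  {ρ f : (Fin n → ℝ) → ℝ}

noncomputable def momentPoly (I : Finset (Fin n → ℕ)) (lam : {i // i ∈ I} → ℝ)
    (t : Fin n → ℝ) : ℝ :=
  ∑ i ∈ I.attach, lam i * monom i.1 t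

theorem ae_momentPoly_ne_zero {θ : {i // i ∈ I} → ℝ} (hθ : θ ≠ 0) : ∀ᵐ t, momentPoly I θ t ≠ 0 := by
  classical
  let P : MvPolynomial (Fin n) ℝ :=
    ∑ i ∈ I.attach, MvPolynomial.monomial (Finsupp.equivFunOnFinite.symm i.1) (θ i)
  have heval : ∀ t, MvPolynomial.eval t P = momentPoly I θ t := fun t => by
    simp [P, momentPoly, monom, MvPolynomial.eval_monomial, Finsupp.prod_fintype]
  have hcoeff : ∀ i, P.coeff (Finsupp.equivFunOnFinite.symm i.1) = θ i := fun i => by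
    simp only [P, MvPolynomial.coeff_sum, MvPolynomial.coeff_monomial,
      EmbeddingLike.apply_eq_iff_eq, ← Subtype.ext_iff]
    simp
  have hP : P ≠ 0 := fun h => hθ (funext fun i => by simpa [h] using (hcoeff i).symm)
  simpa [ae_iff, heval] using MvPolynomial.volume_setOf_eval_eq_zero hP

noncomputable def momentPairing (I : Finset (Fin n → ℕ)) (g : (Fin n → ℕ) → ℝ)
    (lam : {i // i ∈ I} → ℝ) : ℝ :=
  ∑ i ∈ I.attach, g i.1 * lam i

noncomputable def expIntegral (T : Set (Fin n → ℝ)) (I : Finset (Fin n → ℕ))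
    (ρ : (Fin n → ℝ) → ℝ) (lam : {i // i ∈ I} → ℝ) : ℝ≥0∞ :=
  ∫⁻ t in T, ENNReal.ofReal (exp (momentPoly I lam t) * ρ t)

noncomputable def quadIntegral (T : Set (Fin n → ℝ)) (I : Finset (Fin n → ℕ))
    (ρ : (Fin n → ℝ) → ℝ) (lam : {i // i ∈ I} → ℝ) : ℝ≥0∞ :=
  ∫⁻ t in T, ENNReal.ofReal (max (momentPoly I lam t) 0 ^ 2 * ρ t)

theorem Lag_eq (lam : {i // i ∈ I} → ℝ) :
    Lag T I g ρ lam = (momentPairing I g lam : EReal) - expIntegral T I ρ lam := rfl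

theorem continuous_momentPoly (lam : {i // i ∈ I} → ℝ) : Continuous (momentPoly I lam) :=
  continuous_finsetSum _ fun _ _ => continuous_const.mul
    (continuous_finsetProd _ fun j _ => (continuous_apply j).pow _)

theorem continuous_momentPoly_apply (t : Fin n → ℝ) : Continuous fun lam => momentPoly I lam t :=
  continuous_finsetSum _ fun i _ => (continuous_apply i).mul continuous_const

theorem momentPoly_smul (r : ℝ) (lam : {i // i ∈ I} → ℝ) (t : Fin n → ℝ) :
    momentPoly I (r • lam) t = r * momentPoly I lam t := by
  simp only [momentPoly, Finset.mul_sum, Pi.smul_apply, smul_eq_mul, mul_assoc]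

theorem continuous_momentPairing : Continuous (momentPairing I g) :=
  continuous_finsetSum _ fun i _ => continuous_const.mul (continuous_apply i)

theorem momentPairing_smul (r : ℝ) (lam : {i // i ∈ I} → ℝ) :
    momentPairing I g (r • lam) = r * momentPairing I g lam := by
  simp only [momentPairing, Finset.mul_sum, Pi.smul_apply, smul_eq_mul, mul_left_comm]

theorem momentPairing_le (lam : {i // i ∈ I} → ℝ) :
    momentPairing I g lam ≤ (∑ i ∈ I.attach, |g i.1|) * ‖lam‖ := by
  rw [Finset.sum_mul]
  refine Finset.sum_le_sum fun i _ => (le_abs_self _).trans ?_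
  rw [abs_mul]
  exact mul_le_mul_of_nonneg_left (norm_le_pi_norm lam i) (abs_nonneg _)

theorem momentPairing_zero : momentPairing I g 0 = 0 := by simp [momentPairing]

theorem momentPoly_mul_eq_sum (lam : {i // i ∈ I} → ℝ) :
    (fun t => momentPoly I lam t * f t) = fun t => ∑ i ∈ I.attach, lam i * (monom i.1 t * f t) := by
  ext t
  simp only [momentPoly, Finset.sum_mul, mul_assoc]

theorem integrable_momentPoly_mul
    (hmom : ∀ i ∈ I, Integrable (fun t => monom i t * f t) (volume.restrict T))
    (lam : {i // i ∈ I} → ℝ) :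
    Integrable (fun t => momentPoly I lam t * f t) (volume.restrict T) := by
  rw [momentPoly_mul_eq_sum]
  exact integrable_finsetSum _ fun i _ => (hmom i.1 i.2).const_mul _

theorem integral_momentPoly_mul
    (hmom : ∀ i ∈ I, Integrable (fun t => monom i t * f t) (volume.restrict T))
    (hmg : ∀ i ∈ I, ∫ t in T, monom i t * f t = g i) (lam : {i // i ∈ I} → ℝ) :
    ∫ t in T, momentPoly I lam t * f t = momentPairing I g lam := by
  rw [momentPoly_mul_eq_sum, integral_finsetSum _ fun i _ => (hmom i.1 i.2).const_mul _]
  refine Finset.sum_congr rfl fun i _ => ?_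
  rw [integral_const_mul, hmg i.1 i.2, mul_comm]

theorem aemeasurable_ofReal_comp_momentPoly {φ : ℝ → ℝ} (hφ : Continuous φ)
    (hρ : AEMeasurable ρ (volume.restrict T)) (lam : {i // i ∈ I} → ℝ) :
    AEMeasurable (fun t => ENNReal.ofReal (φ (momentPoly I lam t) * ρ t)) (volume.restrict T) :=
  ENNReal.measurable_ofReal.comp_aemeasurable
    ((hφ.comp (continuous_momentPoly lam)).measurable.aemeasurable.mul hρ)

theorem lowerSemicontinuous_lintegral_ofReal_comp_momentPoly {φ : ℝ → ℝ} (hφ : Continuous φ)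
    (hρ : AEMeasurable ρ (volume.restrict T)) :
    LowerSemicontinuous fun lam : {i // i ∈ I} → ℝ =>
      ∫⁻ t in T, ENNReal.ofReal (φ (momentPoly I lam t) * ρ t) :=
  lowerSemicontinuous_lintegral (aemeasurable_ofReal_comp_momentPoly hφ hρ) fun t =>
    (ENNReal.continuous_ofReal.comp
      ((hφ.comp (continuous_momentPoly_apply t)).mul continuous_const)).lowerSemicontinuous

theorem lowerSemicontinuous_quadIntegral (hρ : AEMeasurable ρ (volume.restrict T)) :
    LowerSemicontinuous (quadIntegral T I ρ) :=
  lowerSemicontinuous_lintegral_ofReal_comp_momentPoly (φ := fun x => max x 0 ^ 2) (by fun_prop) hρ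

theorem lowerSemicontinuous_expIntegral (hρ : AEMeasurable ρ (volume.restrict T)) :
    LowerSemicontinuous (expIntegral T I ρ) :=
  lowerSemicontinuous_lintegral_ofReal_comp_momentPoly continuous_exp hρ

theorem mul_max_zero_sq_le_exp {R : ℝ} (hR : 0 ≤ R) (x : ℝ) :
    R ^ 2 / 2 * max x 0 ^ 2 ≤ exp (R * x) := by
  rcases le_total x 0 with hx | hx
  · rw [max_eq_right hx]
    simpa using (exp_pos _).le
  · rw [max_eq_left hx]
    nlinarith [quadratic_le_exp_of_nonneg (mul_nonneg hR hx), mul_nonneg hR hx]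

theorem ofReal_mul_quadIntegral_le_expIntegral {R : ℝ} (hR : 0 ≤ R) (lam : {i // i ∈ I} → ℝ) :
    ENNReal.ofReal (R ^ 2 / 2) * quadIntegral T I ρ lam ≤ expIntegral T I ρ (R • lam) := by
  rw [quadIntegral, ← lintegral_const_mul' _ _ ENNReal.ofReal_ne_top]
  refine lintegral_mono fun t => ?_
  rw [← ENNReal.ofReal_mul (by positivity), momentPoly_smul]
  rcases le_total (ρ t) 0 with hρt | hρt
  · rw [ENNReal.ofReal_of_nonpos (mul_nonpos_of_nonneg_of_nonpos (by positivity)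
      (mul_nonpos_of_nonneg_of_nonpos (by positivity) hρt))]
    exact zero_le
  · rw [← mul_assoc]
    exact ENNReal.ofReal_le_ofReal
      (mul_le_mul_of_nonneg_right (mul_max_zero_sq_le_exp hR _) hρt)

theorem ae_momentPoly_nonpos_of_quadIntegral_eq_zero (hρ : AEMeasurable ρ (volume.restrict T))
    (hρpos : ∀ᵐ t ∂(volume.restrict T), 0 < ρ t) {θ : {i // i ∈ I} → ℝ}
    (hq : quadIntegral T I ρ θ = 0) : ∀ᵐ t ∂(volume.restrict T), momentPoly I θ t ≤ 0 := by
  have hzero := (lintegral_eq_zero_iff'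
    (aemeasurable_ofReal_comp_momentPoly (φ := fun x => max x 0 ^ 2) (by fun_prop) hρ θ)).1 hq
  filter_upwards [hzero, hρpos] with t ht hρt
  by_contra! hpos
  have : 0 < max (momentPoly I θ t) 0 ^ 2 * ρ t :=
    mul_pos (pow_pos (lt_max_of_lt_left hpos) 2) hρt
  exact (ENNReal.ofReal_pos.2 this).ne' ht

theorem momentPairing_neg_of_quadIntegral_eq_zero (hρ : AEMeasurable ρ (volume.restrict T))
    (hρpos : ∀ᵐ t ∂(volume.restrict T), 0 < ρ t) (hf0 : ∀ᵐ t ∂(volume.restrict T), 0 ≤ f t)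
    (hmom : ∀ i ∈ I, Integrable (fun t => monom i t * f t) (volume.restrict T))
    (hmg : ∀ i ∈ I, ∫ t in T, monom i t * f t = g i) (hI0 : (0 : Fin n → ℕ) ∈ I)
    (hg0 : g 0 = 1) {θ : {i // i ∈ I} → ℝ} (hθ : θ ≠ 0) (hq : quadIntegral T I ρ θ = 0) :
    momentPairing I g θ < 0 := by
  have hnonpos := ae_momentPoly_nonpos_of_quadIntegral_eq_zero hρ hρpos hq
  have hnonneg : 0 ≤ᵐ[volume.restrict T] fun t => -(momentPoly I θ t * f t) := by
    filter_upwards [hnonpos, hf0] with t h1 h2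
    exact neg_nonneg.2 (mul_nonpos_of_nonpos_of_nonneg h1 h2)
  rw [← integral_momentPoly_mul hmom hmg]
  refine lt_of_le_of_ne ?_ fun h0 => ?_
  · have := integral_nonneg_of_ae hnonneg
    rw [integral_neg] at this
    linarith
  -- the integrand `θ(t) f(t) ≤ 0` has integral zero, and `θ(t) ≠ 0` a.e., so `f = 0` a.e.
  have hprod := (integral_eq_zero_iff_of_nonneg_ae hnonneg
    (integrable_momentPoly_mul hmom θ).neg).1 (by rw [integral_neg, h0, neg_zero])
  have hf : ∀ᵐ t ∂(volume.restrict T), f t = 0 := by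
    filter_upwards [hprod, ae_restrict_of_ae (ae_momentPoly_ne_zero hθ)] with t h1 h2
    simpa [h2] using h1
  have := hmg 0 hI0
  rw [integral_eq_zero_of_ae (by filter_upwards [hf] with t ht; simp [ht]), hg0] at this
  exact zero_ne_one this

theorem Lag_le_momentPairing (lam : {i // i ∈ I} → ℝ) :
    Lag T I g ρ lam ≤ momentPairing I g lam := by
  simpa [Lag_eq] using EReal.coe_sub_coe_ennreal_le (a := momentPairing I g lam)
    (c := expIntegral T I ρ lam) le_rfl (by simp)

theorem Lag_zero (hρint : Integrable ρ (volume.restrict T)) :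
    Lag T I g ρ 0 = ((-(∫⁻ t in T, ENNReal.ofReal (ρ t)).toReal : ℝ) : EReal) := by
  have hexp : expIntegral T I ρ 0 = ∫⁻ t in T, ENNReal.ofReal (ρ t) := by
    simp [expIntegral, momentPoly]
  rw [Lag_eq, momentPairing_zero, hexp, ← ENNReal.ofReal_toReal hρint.lintegral_lt_top.ne,
    EReal.coe_ennreal_ofReal, max_eq_left ENNReal.toReal_nonneg, ENNReal.toReal_ofReal
    ENNReal.toReal_nonneg, ← EReal.coe_sub, zero_sub]

theorem exists_Lag_le_neg_mul_norm (hρ : AEMeasurable ρ (volume.restrict T))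
    (hρpos : ∀ᵐ t ∂(volume.restrict T), 0 < ρ t) (hf0 : ∀ᵐ t ∂(volume.restrict T), 0 ≤ f t)
    (hmom : ∀ i ∈ I, Integrable (fun t => monom i t * f t) (volume.restrict T))
    (hmg : ∀ i ∈ I, ∫ t in T, monom i t * f t = g i) (hI0 : (0 : Fin n → ℕ) ∈ I)
    (hg0 : g 0 = 1) :
    ∃ c > 0, ∃ R₀, ∀ lam : {i // i ∈ I} → ℝ, R₀ ≤ ‖lam‖ →
      Lag T I g ρ lam ≤ ((-(c * ‖lam‖) : ℝ) : EReal) := by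
  obtain ⟨c, hc, hdich⟩ :=
    (isCompact_sphere (0 : {i // i ∈ I} → ℝ) 1).exists_pos_ofReal_le_or_le_neg
      (lowerSemicontinuous_quadIntegral hρ) continuous_momentPairing fun θ hθ hq =>
        momentPairing_neg_of_quadIntegral_eq_zero hρ hρpos hf0 hmom hmg hI0 hg0
          (ne_zero_of_mem_sphere one_ne_zero ⟨θ, hθ⟩) hq
  set G := ∑ i ∈ I.attach, |g i.1|
  have hG : 0 ≤ G := Finset.sum_nonneg fun i _ => abs_nonneg _
  suffices h : ∀ θ : {i // i ∈ I} → ℝ, ‖θ‖ = 1 → ∀ R, 2 * (G + c) ≤ c * R →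
      Lag T I g ρ (R • θ) ≤ ((-(c * R) : ℝ) : EReal) by
    refine ⟨c, hc, 2 * (G + c) / c, fun lam hR => ?_⟩
    have hlam : lam ≠ 0 := norm_pos_iff.1 (lt_of_lt_of_le (by positivity) hR)
    have hθ : ‖‖lam‖⁻¹ • lam‖ = 1 := by
      rw [norm_smul, norm_inv, norm_norm, inv_mul_cancel₀ (norm_ne_zero_iff.2 hlam)]
    simpa [smul_inv_smul₀ (norm_ne_zero_iff.2 hlam)] using
      h _ hθ ‖lam‖ (by rw [div_le_iff₀ hc] at hR; linarith)
  intro θ hθ R hR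
  have hRpos : 0 < R := pos_of_mul_pos_right (lt_of_lt_of_le (by positivity) hR) hc.le
  have hpair := momentPairing_le (g := g) θ
  rw [hθ, mul_one] at hpair
  rw [Lag_eq, momentPairing_smul]
  rcases hdich θ (mem_sphere_zero_iff_norm.2 hθ) with hq | hpair_neg
  · have hexp : ENNReal.ofReal (R ^ 2 / 2 * c) ≤ expIntegral T I ρ (R • θ) := by
      rw [ENNReal.ofReal_mul (by positivity)]
      calc ENNReal.ofReal (R ^ 2 / 2) * ENNReal.ofReal c
          ≤ ENNReal.ofReal (R ^ 2 / 2) * quadIntegral T I ρ θ := by gcongr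
        _ ≤ expIntegral T I ρ (R • θ) := ofReal_mul_quadIntegral_le_expIntegral hRpos.le θ
    refine (EReal.coe_sub_coe_ennreal_le (by positivity) hexp).trans (EReal.coe_le_coe_iff.2 ?_)
    nlinarith
  · refine (EReal.coe_sub_coe_ennreal_le le_rfl (by simp)).trans (EReal.coe_le_coe_iff.2 ?_)
    nlinarith

theorem eventually_Lag_le_Lag_zero (hρint : Integrable ρ (volume.restrict T))
    (hρpos : ∀ᵐ t ∂(volume.restrict T), 0 < ρ t) (hf0 : ∀ᵐ t ∂(volume.restrict T), 0 ≤ f t)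
    (hmom : ∀ i ∈ I, Integrable (fun t => monom i t * f t) (volume.restrict T))
    (hmg : ∀ i ∈ I, ∫ t in T, monom i t * f t = g i) (hI0 : (0 : Fin n → ℕ) ∈ I)
    (hg0 : g 0 = 1) :
    ∀ᶠ lam in cocompact ({i // i ∈ I} → ℝ), Lag T I g ρ lam ≤ Lag T I g ρ 0 := by
  obtain ⟨c, hc, R₀, hR₀⟩ :=
    exists_Lag_le_neg_mul_norm hρint.aemeasurable hρpos hf0 hmom hmg hI0 hg0
  set B := (∫⁻ t in T, ENNReal.ofReal (ρ t)).toReal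
  filter_upwards [tendsto_norm_cocompact_atTop.eventually_ge_atTop (max R₀ (B / c))] with lam hlam
  rw [Lag_zero hρint]
  refine (hR₀ lam (le_of_max_le_left hlam)).trans (EReal.coe_le_coe_iff.2 ?_)
  have := (div_le_iff₀ hc).1 (le_of_max_le_right hlam)
  linarith

theorem upperSemicontinuous_Lag (hρ : AEMeasurable ρ (volume.restrict T)) :
    UpperSemicontinuous (Lag T I g ρ) :=
  EReal.upperSemicontinuous_coe_sub_coe_ennreal continuous_momentPairing
    (lowerSemicontinuous_expIntegral hρ)

end Lagrangian

theorem stmt_1_general {n : ℕ}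
    (T : Set (Fin n → ℝ))
    (I : Finset (Fin n → ℕ)) (hI0 : (0 : Fin n → ℕ) ∈ I)
    (g : (Fin n → ℕ) → ℝ) (hg0 : g 0 = 1)
    (ρ : (Fin n → ℝ) → ℝ) (hρint : Integrable ρ (volume.restrict T))
    (hρpos : ∀ᵐ t ∂(volume.restrict T), 0 < ρ t)
    (f : (Fin n → ℝ) → ℝ)
    (hf0 : ∀ᵐ t ∂(volume.restrict T), 0 ≤ f t)
    (hmom : ∀ i ∈ I, Integrable (fun t => monom i t * f t) (volume.restrict T))
    (hmg : ∀ i ∈ I, ∫ t in T, monom i t * f t = g i) :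
    (∃ M : ℝ, ∀ lam : {i // i ∈ I} → ℝ, Lag T I g ρ lam ≤ (M : EReal)) ∧
      ∃ lam' : {i // i ∈ I} → ℝ,
        ∀ lam : {i // i ∈ I} → ℝ, Lag T I g ρ lam ≤ Lag T I g ρ lam' := by
  obtain ⟨lam', hmax⟩ := (upperSemicontinuous_Lag hρint.aemeasurable).exists_forall_ge' 0
    (eventually_Lag_le_Lag_zero hρint hρpos hf0 hmom hmg hI0 hg0)
  exact ⟨⟨momentPairing I g lam', fun lam => (hmax lam).trans (Lag_le_momentPairing lam')⟩,
    lam', hmax⟩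

/-- Implication (a) ⇒ (b) of Theorem 3: if the truncated moment problem on the closed set `T`
has an `L¹` solution, then the Lagrangian is bounded above and attains its supremum.
No regularity assumption on `T` (nor on `I`) is needed. -/
theorem stmt_1 {n : ℕ} (k : ℕ) (hk : 0 < k)
    (T : Set (Fin n → ℝ)) (hTclosed : IsClosed T)
    (I : Finset (Fin n → ℕ)) (hI0 : (0 : Fin n → ℕ) ∈ I)
    (hdeg : ∀ i ∈ I, ∑ m, i m ≤ 2 * k) (hdeg' : ∃ i ∈ I, ∑ m, i m = 2 * k)
    (haxes : ∀ ι : Fin n, (fun m => if m = ι then 2 * k else 0) ∈ I)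
    (g : (Fin n → ℕ) → ℝ) (hg0 : g 0 = 1)
    (ρ : (Fin n → ℝ) → ℝ) (hρint : Integrable ρ (volume.restrict T))
    (hρpos : ∀ᵐ t ∂(volume.restrict T), 0 < ρ t)
    (f : (Fin n → ℝ) → ℝ) (hfint : Integrable f (volume.restrict T))
    (hf0 : ∀ᵐ t ∂(volume.restrict T), 0 ≤ f t)
    (hmom : ∀ i ∈ I, Integrable (fun t => monom i t * f t) (volume.restrict T))
    (hmg : ∀ i ∈ I, ∫ t in T, monom i t * f t = g i) :
    (∃ M : ℝ, ∀ lam : {i // i ∈ I} → ℝ, Lag T I g ρ lam ≤ (M : EReal)) ∧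
      ∃ lam' : {i // i ∈ I} → ℝ,
        ∀ lam : {i // i ∈ I} → ℝ, Lag T I g ρ lam ≤ Lag T I g ρ lam' :=
  stmt_1_general T I hI0 g hg0 ρ hρint hρpos f hf0 hmom hmg
end

section
/- Let T ⊆ ℝ^n be a measurable set, let μ be a finite Borel measure on T such that ∫_T |t^i| dμ(t) < ∞ for every i in a finite set I ⊆ ℤ_+^n with 0 ∈ I, and let g = (g_i)_{i∈I} be real numbers. Suppose f_0 ∈ L^∞(T, μ), f_0 ≥ 0 a.e., satisfies ∫_T t^i f_0(t) dμ(t) = g_i for all i ∈ I. Then for every λ = (λ_i)_{i∈I} ∈ ℝ^N one has Σ_{i∈I} g_i λ_i − ∫_T e^{Σ_{i∈I} λ_i t^i} dμ(t) ≤ ∫_T f_0 ln f_0 dμ − ∫_T f_0 dμ; in particular sup_λ [Σ_{i∈I} g_i λ_i − ∫_T e^{Σ_{i∈I} λ_i t^i} dμ(t)] < ∞. -/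
/-!
The pointwise Fenchel–Young inequality `x y ≤ (x log x - x) + e^y` (`x ≥ 0`), applied with
`x = f₀(t)` and `y = ∑ λᵢ tⁱ` and integrated against `μ` on `T`, bounds
`∫ f₀ ∑ λᵢ tⁱ = ∑ gᵢ λᵢ` by `∫ f₀ ln f₀ - ∫ f₀ + ∫ e^{∑ λᵢ tⁱ}`. Boundedness of `f₀` makes
every integral except the exponential one finite, and when that one is infinite the
left-hand side is `-∞`.
-/

open MeasureTheory Real ENNReal

theorem Real.mul_le_mul_log_sub_add_exp {x : ℝ} (hx : 0 ≤ x) (y : ℝ) :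
    x * y ≤ x * log x - x + exp y := by
  rcases hx.eq_or_lt with rfl | hx
  · simpa using (exp_pos y).le
  · have h := mul_le_mul_of_nonneg_left (add_one_le_exp (y - log x)) hx.le
    rw [exp_sub, exp_log hx, mul_div_cancel₀ _ hx.ne'] at h
    linarith

namespace MeasureTheory

variable {α : Type*} [MeasurableSpace α] {μ : Measure α}

theorem MemLp.integrable_comp_of_continuous {E F : Type*} [NormedAddCommGroup E]
    [ProperSpace E] [NormedAddCommGroup F] [IsFiniteMeasure μ] {f : α → E} (hf : MemLp f ∞ μ)
    {φ : E → F} (hφ : Continuous φ) : Integrable (fun x => φ (f x)) μ := by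
  obtain ⟨C, hC⟩ := (isCompact_closedBall (0 : E) (lpNorm f ∞ μ)).exists_bound_of_continuousOn
    hφ.continuousOn
  refine (integrable_const C).mono' (hφ.comp_aestronglyMeasurable hf.1) ?_
  filter_upwards [ae_le_lpNorm_exponent_top hf] with x hx
  exact hC _ (mem_closedBall_zero_iff.2 hx)

theorem integral_mul_sum_eq_sum_mul_integral {ι : Type*} (s : Finset ι) (c : ι → ℝ)
    (φ : ι → α → ℝ) {f : α → ℝ} (hφf : ∀ i ∈ s, Integrable (fun x => φ i x * f x) μ) :
    ∫ x, f x * ∑ i ∈ s, c i * φ i x ∂μ = ∑ i ∈ s, c i * ∫ x, φ i x * f x ∂μ := by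
  have hexpand :
      (fun x => f x * ∑ i ∈ s, c i * φ i x) = fun x => ∑ i ∈ s, c i * (φ i x * f x) := by
    ext x
    rw [Finset.mul_sum]
    exact Finset.sum_congr rfl fun i _ => by ring
  rw [hexpand, integral_finsetSum _ fun i hi => (hφf i hi).const_mul (c i)]
  exact Finset.sum_congr rfl fun i _ => integral_const_mul (c i) _

variable {f S : α → ℝ}

theorem integral_mul_le_integral_mul_log_sub_add_integral_exp (hf0 : 0 ≤ᵐ[μ] f)
    (hf : Integrable f μ) (hflog : Integrable (fun x => f x * log (f x)) μ)
    (hfS : Integrable (fun x => f x * S x) μ) (hexp : Integrable (fun x => exp (S x)) μ) :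
    ∫ x, f x * S x ∂μ ≤ (∫ x, f x * log (f x) ∂μ - ∫ x, f x ∂μ) + ∫ x, exp (S x) ∂μ := by
  have hent : Integrable (fun x => f x * log (f x) - f x) μ := hflog.sub hf
  rw [← integral_sub hflog hf, ← integral_add hent hexp]
  refine integral_mono_ae hfS (hent.add hexp) ?_
  filter_upwards [hf0] with x hx
  exact mul_le_mul_log_sub_add_exp hx (S x)

theorem integral_mul_sub_lintegral_exp_le (hf0 : 0 ≤ᵐ[μ] f) (hf : Integrable f μ)
    (hflog : Integrable (fun x => f x * log (f x)) μ)
    (hfS : Integrable (fun x => f x * S x) μ) (hS : AEStronglyMeasurable S μ) :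
    ((∫ x, f x * S x ∂μ : ℝ) : EReal) - ((∫⁻ x, .ofReal (exp (S x)) ∂μ : ℝ≥0∞) : EReal)
      ≤ ((∫ x, f x * log (f x) ∂μ - ∫ x, f x ∂μ : ℝ) : EReal) := by
  have hexp_meas : AEStronglyMeasurable (fun x => exp (S x)) μ :=
    continuous_exp.comp_aestronglyMeasurable hS
  have hexp_nonneg : 0 ≤ᵐ[μ] fun x => exp (S x) := .of_forall fun x => (exp_pos (S x)).le
  by_cases hexp : Integrable (fun x => exp (S x)) μ
  · rw [← ofReal_integral_eq_lintegral_ofReal hexp hexp_nonneg, EReal.coe_ennreal_ofReal,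
      max_eq_left (integral_nonneg fun x => (exp_pos (S x)).le), ← EReal.coe_sub,
      EReal.coe_le_coe_iff, sub_le_iff_le_add]
    exact integral_mul_le_integral_mul_log_sub_add_integral_exp hf0 hf hflog hfS hexp
  · rw [← lintegral_ofReal_ne_top_iff_integrable hexp_meas hexp_nonneg, not_ne_iff] at hexp
    simp [hexp]

end MeasureTheory

theorem stmt_5_general {n : ℕ} (T : Set (Fin n → ℝ))
    (μ : Measure (Fin n → ℝ)) [IsFiniteMeasure μ]
    (I : Finset (Fin n → ℕ))
    (hmom : ∀ i ∈ I, Integrable (fun t => monom i t) (μ.restrict T))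
    (g : (Fin n → ℕ) → ℝ)
    (f₀ : (Fin n → ℝ) → ℝ) (hf₀bdd : MemLp f₀ ⊤ (μ.restrict T))
    (hf₀0 : ∀ᵐ t ∂(μ.restrict T), 0 ≤ f₀ t)
    (hf₀g : ∀ i ∈ I, ∫ t in T, monom i t * f₀ t ∂μ = g i) :
    (∀ lam : {i // i ∈ I} → ℝ,
      ((∑ i ∈ I.attach, g i.1 * lam i : ℝ) : EReal)
          - ((∫⁻ t in T, ENNReal.ofReal (Real.exp (∑ i ∈ I.attach, lam i * monom i.1 t)) ∂μ) : EReal)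
        ≤ ((∫ t in T, f₀ t * Real.log (f₀ t) ∂μ - ∫ t in T, f₀ t ∂μ : ℝ) : EReal)) ∧
    ∃ M : ℝ, ∀ lam : {i // i ∈ I} → ℝ,
      ((∑ i ∈ I.attach, g i.1 * lam i : ℝ) : EReal)
          - ((∫⁻ t in T, ENNReal.ofReal (Real.exp (∑ i ∈ I.attach, lam i * monom i.1 t)) ∂μ) : EReal)
        ≤ (M : EReal) := by
  have key : ∀ lam : {i // i ∈ I} → ℝ,
      ((∑ i ∈ I.attach, g i.1 * lam i : ℝ) : EReal)
          - ((∫⁻ t in T, ENNReal.ofReal (exp (∑ i ∈ I.attach, lam i * monom i.1 t)) ∂μ) : EReal)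
        ≤ ((∫ t in T, f₀ t * log (f₀ t) ∂μ - ∫ t in T, f₀ t ∂μ : ℝ) : EReal) := by
    intro lam
    have hS : Integrable (fun t => ∑ i ∈ I.attach, lam i * monom i.1 t) (μ.restrict T) :=
      integrable_finsetSum _ fun i _ => (hmom i.1 i.2).const_mul (lam i)
    have hmoments : ∑ i ∈ I.attach, g i.1 * lam i
        = ∫ t in T, f₀ t * ∑ i ∈ I.attach, lam i * monom i.1 t ∂μ := by
      rw [integral_mul_sum_eq_sum_mul_integral _ _ _
        fun i _ => (hmom i.1 i.2).mul_of_top_left hf₀bdd]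
      exact Finset.sum_congr rfl fun i _ => by rw [hf₀g i.1 i.2, mul_comm]
    rw [hmoments]
    exact integral_mul_sub_lintegral_exp_le hf₀0 (hf₀bdd.integrable le_top)
      (hf₀bdd.integrable_comp_of_continuous continuous_mul_log) (hS.mul_of_top_right hf₀bdd) hS.1
  exact ⟨key, _, key⟩

/-- Fenchel's inequality argument: if `f₀ ∈ L^∞(T,μ)`, `f₀ ≥ 0` a.e., is a solution of the
moment problem `∫_T t^i f₀ dμ = g_i` (`i ∈ I`) for a finite measure `μ` with finite moments
of all orders `i ∈ I`, then for every `λ ∈ ℝ^N`,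
`∑ g_i λ_i − ∫_T e^{∑ λ_i t^i} dμ ≤ ∫_T f₀ ln f₀ dμ − ∫_T f₀ dμ`; in particular the
left-hand side is bounded above over `λ`. -/
theorem stmt_5 {n : ℕ} (T : Set (Fin n → ℝ)) (hT : MeasurableSet T)
    (μ : Measure (Fin n → ℝ)) [IsFiniteMeasure μ]
    (I : Finset (Fin n → ℕ)) (hI0 : (0 : Fin n → ℕ) ∈ I)
    (hmom : ∀ i ∈ I, Integrable (fun t => monom i t) (μ.restrict T))
    (g : (Fin n → ℕ) → ℝ)
    (f₀ : (Fin n → ℝ) → ℝ) (hf₀bdd : MemLp f₀ ⊤ (μ.restrict T))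
    (hf₀0 : ∀ᵐ t ∂(μ.restrict T), 0 ≤ f₀ t)
    (hf₀g : ∀ i ∈ I, ∫ t in T, monom i t * f₀ t ∂μ = g i) :
    (∀ lam : {i // i ∈ I} → ℝ,
      ((∑ i ∈ I.attach, g i.1 * lam i : ℝ) : EReal)
          - ((∫⁻ t in T, ENNReal.ofReal (Real.exp (∑ i ∈ I.attach, lam i * monom i.1 t)) ∂μ) : EReal)
        ≤ ((∫ t in T, f₀ t * Real.log (f₀ t) ∂μ - ∫ t in T, f₀ t ∂μ : ℝ) : EReal)) ∧
    ∃ M : ℝ, ∀ lam : {i // i ∈ I} → ℝ,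
      ((∑ i ∈ I.attach, g i.1 * lam i : ℝ) : EReal)
          - ((∫⁻ t in T, ENNReal.ofReal (Real.exp (∑ i ∈ I.attach, lam i * monom i.1 t)) ∂μ) : EReal)
        ≤ (M : EReal) :=
  stmt_5_general T μ I hmom g f₀ hf₀bdd hf₀0 hf₀g
end

section
/- Let T ⊆ ℝ^n be a closed set, let I ⊆ ℤ_+^n be a finite set with 0 ∈ I, let g = (g_i)_{i∈I} be real numbers, and fix ρ ∈ L^1(T, dt) with ρ > 0 a.e. on T. Suppose the functional L(λ) = Σ_{i∈I} g_i λ_i − ∫_T e^{Σ_{i∈I} λ_i t^i} ρ(t) dt on ℝ^N (N = card I) is bounded from above. Then for every λ = (λ_i)_{i∈I} ∈ ℝ^N such that Σ_{i∈I} λ_i t^i ≤ 0 for all t ∈ T, one has Σ_{i∈I} g_i λ_i ≤ 0. -/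
/-!
If `q = ∑ λ_i t^i ≤ 0` on `T`, then so is `c q` for every `c > 0`, so `e^{c q} ρ ≤ ρ⁺` on `T` and
`L(cλ) ≥ c ∑ g_i λ_i − ∫_T ρ⁺`. An upper bound `M` for `L` then gives `c ∑ g_i λ_i ≤ M + ∫_T ρ⁺`
for all `c > 0`, which forces `∑ g_i λ_i ≤ 0`.
-/

open MeasureTheory Real ENNReal

theorem ofReal_exp_mul_le_ofReal {x : ℝ} (hx : x ≤ 0) (r : ℝ) :
    ENNReal.ofReal (exp x * r) ≤ ENNReal.ofReal r := by
  rcases le_total 0 r with hr | hr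
  · exact ENNReal.ofReal_le_ofReal (mul_le_of_le_one_left hr (exp_le_one_iff.2 hx))
  · rw [ENNReal.ofReal_of_nonpos (mul_nonpos_of_nonneg_of_nonpos (exp_pos x).le hr)]
    exact bot_le

theorem lintegral_ofReal_exp_mul_le {α : Type*} [MeasurableSpace α] {μ : Measure α}
    {f : α → ℝ} (hf : ∀ᵐ x ∂μ, f x ≤ 0) (ρ : α → ℝ) :
    ∫⁻ x, ENNReal.ofReal (exp (f x) * ρ x) ∂μ ≤ ∫⁻ x, ENNReal.ofReal (ρ x) ∂μ :=
  lintegral_mono_ae (hf.mono fun _ hx => ofReal_exp_mul_le_ofReal hx _)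

theorem nonpos_of_forall_pos_mul_le {S B : ℝ} (h : ∀ c > 0, c * S ≤ B) : S ≤ 0 := by
  by_contra! hS
  have hc := h ((|B| + 1) / S) (by positivity)
  rw [div_mul_cancel₀ _ hS.ne'] at hc
  linarith [le_abs_self B]

theorem EReal.coe_sub_coe_ennreal {x : ℝ≥0∞} (hx : x ≠ ⊤) (a : ℝ) :
    (a : EReal) - x = ((a - x.toReal : ℝ) : EReal) := by
  rw [EReal.coe_sub, EReal.coe_ennreal_toReal hx]

theorem continuous_monom {n : ℕ} (i : Fin n → ℕ) : Continuous (monom i) :=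
  continuous_finsetProd _ fun j _ => (continuous_apply j).pow _

theorem Lag_ge_of_nonpos_on {n : ℕ} {T : Set (Fin n → ℝ)} {I : Finset (Fin n → ℕ)}
    (g : (Fin n → ℕ) → ℝ) {ρ : (Fin n → ℝ) → ℝ} (hρint : Integrable ρ (volume.restrict T))
    {lam : {i // i ∈ I} → ℝ} (hlam : ∀ t ∈ T, ∑ i ∈ I.attach, lam i * monom i.1 t ≤ 0) :
    (((∑ i ∈ I.attach, g i.1 * lam i) - (∫⁻ t in T, ENNReal.ofReal (ρ t)).toReal : ℝ) : EReal)
      ≤ Lag T I g ρ lam := by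
  set q := fun t => ∑ i ∈ I.attach, lam i * monom i.1 t
  have hq : Continuous q := continuous_finsetSum _ fun i _ =>
    continuous_const.mul (continuous_monom i.1)
  -- `{q ≤ 0}` is a measurable superset of `T`, so no measurability of `T` is needed here.
  have hq_ae : ∀ᵐ t ∂(volume.restrict T), q t ≤ 0 :=
    (ae_restrict_iff (measurableSet_le hq.measurable measurable_const)).2 (ae_of_all _ hlam)
  have hK : ∫⁻ t in T, ENNReal.ofReal (ρ t) ≠ ⊤ :=
    ((lintegral_ofReal_le_lintegral_enorm ρ).trans_lt hρint.2).ne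
  have hle := lintegral_ofReal_exp_mul_le hq_ae ρ
  rw [Lag, EReal.coe_sub_coe_ennreal (ne_top_of_le_ne_top hK hle), EReal.coe_le_coe_iff]
  exact sub_le_sub_left (ENNReal.toReal_mono hK hle) _

theorem stmt_10_general {n : ℕ}
    (T : Set (Fin n → ℝ))
    (I : Finset (Fin n → ℕ))
    (g : (Fin n → ℕ) → ℝ)
    (ρ : (Fin n → ℝ) → ℝ) (hρint : Integrable ρ (volume.restrict T))
    (hbdd : ∃ M : ℝ, ∀ lam : {i // i ∈ I} → ℝ, Lag T I g ρ lam ≤ (M : EReal)) :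
    ∀ lam : {i // i ∈ I} → ℝ,
      (∀ t ∈ T, ∑ i ∈ I.attach, lam i * monom i.1 t ≤ 0) →
      ∑ i ∈ I.attach, g i.1 * lam i ≤ 0 := by
  intro lam hlam
  obtain ⟨M, hM⟩ := hbdd
  set K := (∫⁻ t in T, ENNReal.ofReal (ρ t)).toReal
  refine nonpos_of_forall_pos_mul_le (B := M + K) fun c hc => ?_
  have hclam : ∀ t ∈ T, ∑ i ∈ I.attach, (c * lam i) * monom i.1 t ≤ 0 := fun t ht => by
    simpa only [mul_assoc, ← Finset.mul_sum] using mul_nonpos_of_nonneg_of_nonpos hc.le (hlam t ht)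
  have hL := (Lag_ge_of_nonpos_on g hρint hclam).trans (hM _)
  rw [EReal.coe_le_coe_iff] at hL
  rw [Finset.mul_sum]
  simp only [mul_left_comm (g _)] at hL
  linarith

/-- If the Lagrangian `L` is bounded above, then the Riesz functional of `g` is nonpositive
on every polynomial `∑_{i∈I} λ_i X^i` that is nonpositive on `T`. -/
theorem stmt_10 {n : ℕ}
    (T : Set (Fin n → ℝ)) (hTclosed : IsClosed T)
    (I : Finset (Fin n → ℕ)) (hI0 : (0 : Fin n → ℕ) ∈ I)
    (g : (Fin n → ℕ) → ℝ)
    (ρ : (Fin n → ℝ) → ℝ) (hρint : Integrable ρ (volume.restrict T))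
    (hρpos : ∀ᵐ t ∂(volume.restrict T), 0 < ρ t)
    (hbdd : ∃ M : ℝ, ∀ lam : {i // i ∈ I} → ℝ, Lag T I g ρ lam ≤ (M : EReal)) :
    ∀ lam : {i // i ∈ I} → ℝ,
      (∀ t ∈ T, ∑ i ∈ I.attach, lam i * monom i.1 t ≤ 0) →
      ∑ i ∈ I.attach, g i.1 * lam i ≤ 0 :=
  stmt_10_general T I g ρ hρint hbdd
end
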